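/- arXiv:1206.2997 — 4 statements merged into one kernel-verified Lean document; each statement's English description precedes it below -/
import Mathlib

section
/- Let d ≥ 3 be an integer and let α, β, p be real numbers with α + β = d, β > 0, 1 < p < ∞, and p·max(α, 0) < d. Define the integral operator K acting on measurable functions f on (0,∞) by (Kf)(r) = ∫_{r}^{∞} r^{-α} (r')^{-β} f(r') (r')^{d-1} dr'. Then K is bounded on L^p((0,∞), r^{d-1} dr): there exists a constant C > 0 such that ‖Kf‖_{L^p((0,∞), r^{d-1}dr)} ≤ C·‖f‖_{L^p((0,∞), r^{d-1}dr)} for every f ∈ L^p((0,∞), r^{d-1} dr). -/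
/-
Write `(Kf)(r) = ∫ k(r, r') f(r') dμ(r')` with `μ = r^{d-1} dr` and kernel
`k(r, r') = 1_{r < r'} r^{-α} r'^{-β}`. Schur's test with the power weight
`w(r) = r^{-d/(pq)}` (`q` the conjugate exponent) applies:
`∫ k(r, ·) w^q dμ = c w(r)^q` and `∫ k(·, r') w^p dμ = c w(r')^p` with the same constant
`c = (d/p - α)⁻¹`, the integrals being finite exactly when `pα < d`. Hence `‖K‖ ≤ c`.
-/

open MeasureTheory Set

/-- The measure `r^{d-1} dr` on `(0,∞)` (with `dr` Lebesgue measure). -/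
noncomputable def coneMeasure (d : ℕ) : Measure ℝ :=
  (volume.restrict (Ioi (0 : ℝ))).withDensity (fun r => ENNReal.ofReal (r ^ ((d : ℝ) - 1)))

open scoped ENNReal

section Schur

variable {X Y : Type*} [MeasurableSpace X] [MeasurableSpace Y] {μ : Measure X} {ν : Measure Y}
  {p q : ℝ} {k : X → Y → ℝ≥0∞} {g : X → ℝ≥0∞} {h : Y → ℝ≥0∞} {C₁ C₂ : ℝ≥0∞}

theorem lintegral_mul_rpow_le_of_weight (hpq : p.HolderConjugate q) {κ f : Y → ℝ≥0∞}
    (hκ : Measurable κ) (hf : Measurable f) (hh : Measurable h) (hh0 : ∀ᵐ y ∂ν, h y ≠ 0)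
    (hhtop : ∀ᵐ y ∂ν, h y ≠ ∞) :
    (∫⁻ y, κ y * f y ∂ν) ^ p ≤
      (∫⁻ y, κ y * h y ^ q ∂ν) ^ (p / q) * ∫⁻ y, κ y * (f y / h y) ^ p ∂ν := by
  have hac := withDensity_absolutelyContinuous ν κ
  have hfh : Measurable fun y => (f y / h y) ^ p := (hf.div hh).pow_const p
  have hsplit : ∫⁻ y, f y ∂ν.withDensity κ = ∫⁻ y, (h * fun y => f y / h y) y ∂ν.withDensity κ := by
    refine lintegral_congr_ae ?_
    filter_upwards [hac.ae_le hh0, hac.ae_le hhtop] with y hy0 hytop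
    exact (ENNReal.mul_div_cancel hy0 hytop).symm
  have holder : (∫⁻ y, f y ∂ν.withDensity κ) ^ p ≤ (∫⁻ y, h y ^ q ∂ν.withDensity κ) ^ (p / q) *
      ∫⁻ y, (f y / h y) ^ p ∂ν.withDensity κ := calc
    _ ≤ ((∫⁻ y, h y ^ q ∂ν.withDensity κ) ^ (1 / q) *
          (∫⁻ y, (f y / h y) ^ p ∂ν.withDensity κ) ^ (1 / p)) ^ p := by
        rw [hsplit]
        exact ENNReal.rpow_le_rpow (ENNReal.lintegral_mul_le_Lp_mul_Lq _ hpq.symm hh.aemeasurable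
          (hf.div hh).aemeasurable) hpq.nonneg
    _ = _ := by
        rw [ENNReal.mul_rpow_of_nonneg _ _ hpq.nonneg, ← ENNReal.rpow_mul, ← ENNReal.rpow_mul,
          one_div_mul_eq_div, one_div_mul_cancel hpq.ne_zero, ENNReal.rpow_one]
  simpa only [lintegral_withDensity_eq_lintegral_mul ν hκ hf,
    lintegral_withDensity_eq_lintegral_mul ν hκ (hh.pow_const q),
    lintegral_withDensity_eq_lintegral_mul ν hκ hfh, Pi.mul_apply] using holder

variable [SFinite μ] [SFinite ν]

theorem lintegral_kernel_rpow_le_of_schur (hpq : p.HolderConjugate q)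
    (hk : Measurable (Function.uncurry k)) (hg : Measurable g) (hh : Measurable h)
    (hh0 : ∀ᵐ y ∂ν, h y ≠ 0) (hhtop : ∀ᵐ y ∂ν, h y ≠ ∞)
    (h₁ : ∀ᵐ x ∂μ, ∫⁻ y, k x y * h y ^ q ∂ν ≤ C₁ * g x ^ q)
    (h₂ : ∀ᵐ y ∂ν, ∫⁻ x, k x y * g x ^ p ∂μ ≤ C₂ * h y ^ p)
    {f : Y → ℝ≥0∞} (hf : Measurable f) :
    ∫⁻ x, (∫⁻ y, k x y * f y ∂ν) ^ p ∂μ ≤ C₁ ^ (p / q) * C₂ * ∫⁻ y, f y ^ p ∂ν := by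
  have hkx (x : X) : Measurable (k x) := hk.of_uncurry_left
  have hfh : Measurable fun y => (f y / h y) ^ p := (hf.div hh).pow_const p
  have hpq0 : 0 ≤ p / q := div_nonneg hpq.nonneg hpq.symm.nonneg
  have pointwise : ∀ᵐ x ∂μ, (∫⁻ y, k x y * f y ∂ν) ^ p ≤
      C₁ ^ (p / q) * (g x ^ p * ∫⁻ y, k x y * (f y / h y) ^ p ∂ν) := by
    filter_upwards [h₁] with x hx
    calc _ ≤ (∫⁻ y, k x y * h y ^ q ∂ν) ^ (p / q) * ∫⁻ y, k x y * (f y / h y) ^ p ∂ν :=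
          lintegral_mul_rpow_le_of_weight hpq (hkx x) hf hh hh0 hhtop
      _ ≤ (C₁ * g x ^ q) ^ (p / q) * ∫⁻ y, k x y * (f y / h y) ^ p ∂ν := by gcongr
      _ = C₁ ^ (p / q) * (g x ^ p * ∫⁻ y, k x y * (f y / h y) ^ p ∂ν) := by
          rw [ENNReal.mul_rpow_of_nonneg _ _ hpq0, ← ENNReal.rpow_mul,
            mul_div_cancel₀ p hpq.symm.ne_zero, mul_assoc]
  have swap : ∫⁻ x, g x ^ p * ∫⁻ y, k x y * (f y / h y) ^ p ∂ν ∂μ =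
      ∫⁻ y, (f y / h y) ^ p * ∫⁻ x, k x y * g x ^ p ∂μ ∂ν := calc
    _ = ∫⁻ x, ∫⁻ y, g x ^ p * (k x y * (f y / h y) ^ p) ∂ν ∂μ :=
        lintegral_congr fun x => (lintegral_const_mul _ ((hkx x).mul hfh)).symm
    _ = ∫⁻ y, ∫⁻ x, g x ^ p * (k x y * (f y / h y) ^ p) ∂μ ∂ν :=
        lintegral_lintegral_swap (by fun_prop)
    _ = _ := lintegral_congr fun y => by
        rw [← lintegral_const_mul]
        · exact lintegral_congr fun x => by ring
        · exact hk.of_uncurry_right.mul (hg.pow_const p)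
  calc ∫⁻ x, (∫⁻ y, k x y * f y ∂ν) ^ p ∂μ
      ≤ ∫⁻ x, C₁ ^ (p / q) * (g x ^ p * ∫⁻ y, k x y * (f y / h y) ^ p ∂ν) ∂μ :=
        lintegral_mono_ae pointwise
    _ = C₁ ^ (p / q) * ∫⁻ y, (f y / h y) ^ p * ∫⁻ x, k x y * g x ^ p ∂μ ∂ν := by
        rw [lintegral_const_mul, swap]
        exact (hg.pow_const p).mul (hk.mul (hfh.comp measurable_snd)).lintegral_prod_right
    _ ≤ C₁ ^ (p / q) * ∫⁻ y, (f y / h y) ^ p * (C₂ * h y ^ p) ∂ν := by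
        gcongr _ * ?_
        exact lintegral_mono_ae (h₂.mono fun y hy => by gcongr)
    _ = C₁ ^ (p / q) * C₂ * ∫⁻ y, f y ^ p ∂ν := by
        rw [mul_assoc, ← lintegral_const_mul _ (hf.pow_const p)]
        congr 1
        refine lintegral_congr_ae ?_
        filter_upwards [hh0, hhtop] with y hy0 hytop
        rw [mul_left_comm, ← ENNReal.mul_rpow_of_nonneg _ _ hpq.nonneg,
          ENNReal.div_mul_cancel hy0 hytop]

theorem eLpNorm_le_of_schur {E F : Type*} [TopologicalSpace E] [ContinuousENorm E] [ENorm F]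
    (hpq : p.HolderConjugate q) (hk : Measurable (Function.uncurry k)) (hg : Measurable g)
    (hh : Measurable h) (hh0 : ∀ᵐ y ∂ν, h y ≠ 0) (hhtop : ∀ᵐ y ∂ν, h y ≠ ∞)
    (h₁ : ∀ᵐ x ∂μ, ∫⁻ y, k x y * h y ^ q ∂ν ≤ C₁ * g x ^ q)
    (h₂ : ∀ᵐ y ∂ν, ∫⁻ x, k x y * g x ^ p ∂μ ≤ C₂ * h y ^ p)
    {f : Y → E} (hf : AEStronglyMeasurable f ν) {T : X → F}
    (hT : ∀ᵐ x ∂μ, ‖T x‖ₑ ≤ ∫⁻ y, k x y * ‖f y‖ₑ ∂ν) :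
    eLpNorm T (ENNReal.ofReal p) μ ≤
      C₁ ^ (1 / q) * C₂ ^ (1 / p) * eLpNorm f (ENNReal.ofReal p) ν := by
  have hp0 : 0 < p := hpq.pos
  have hP0 : ENNReal.ofReal p ≠ 0 := ENNReal.ofReal_ne_zero_iff.2 hp0
  rw [eLpNorm_eq_lintegral_rpow_enorm_toReal hP0 ENNReal.ofReal_ne_top,
    eLpNorm_eq_lintegral_rpow_enorm_toReal hP0 ENNReal.ofReal_ne_top,
    ENNReal.toReal_ofReal hp0.le]
  set f' := hf.enorm.mk
  have hff' : (‖f ·‖ₑ) =ᵐ[ν] f' := hf.enorm.ae_eq_mk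
  calc (∫⁻ x, ‖T x‖ₑ ^ p ∂μ) ^ (1 / p)
      ≤ (∫⁻ x, (∫⁻ y, k x y * f' y ∂ν) ^ p ∂μ) ^ (1 / p) := by
        gcongr ?_ ^ _
        refine lintegral_mono_ae (hT.mono fun x hx => ?_)
        gcongr
        exact hx.trans_eq (lintegral_congr_ae (hff'.mono fun y hy => congrArg (k x y * ·) hy))
    _ ≤ (C₁ ^ (p / q) * C₂ * ∫⁻ y, f' y ^ p ∂ν) ^ (1 / p) := by
        gcongr
        exact lintegral_kernel_rpow_le_of_schur hpq hk hg hh hh0 hhtop h₁ h₂ hf.enorm.measurable_mk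
    _ = C₁ ^ (1 / q) * C₂ ^ (1 / p) * (∫⁻ y, ‖f y‖ₑ ^ p ∂ν) ^ (1 / p) := by
        rw [lintegral_congr_ae (hff'.mono fun y hy => congrArg (· ^ p) hy.symm),
          ENNReal.mul_rpow_of_nonneg _ _ (by positivity),
          ENNReal.mul_rpow_of_nonneg _ _ (by positivity), ← ENNReal.rpow_mul]
        congr 3
        field_simp

end Schur

theorem lintegral_Ioi_ofReal_rpow {a c : ℝ} (ha : a < -1) (hc : 0 < c) :
    ∫⁻ r in Ioi c, ENNReal.ofReal r ^ a =
      ENNReal.ofReal (-(a + 1))⁻¹ * ENNReal.ofReal c ^ (a + 1) := by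
  have hpow : ∫⁻ r in Ioi c, ENNReal.ofReal r ^ a = ∫⁻ r in Ioi c, ENNReal.ofReal (r ^ a) :=
    setLIntegral_congr_fun measurableSet_Ioi fun r hr => ENNReal.ofReal_rpow_of_pos (hc.trans hr)
  rw [hpow, ← ofReal_integral_eq_lintegral_ofReal (integrableOn_Ioi_rpow_of_lt ha hc)
      ((ae_restrict_iff' measurableSet_Ioi).2 (ae_of_all _ fun r (hr : c < r) =>
        Real.rpow_nonneg (hc.trans hr).le a)),
    integral_Ioi_rpow_of_lt ha hc, ENNReal.ofReal_rpow_of_pos hc,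
    ← ENNReal.ofReal_mul (inv_pos.2 (by linarith)).le]
  congr 1
  field_simp

theorem lintegral_Ioo_ofReal_rpow {a c : ℝ} (ha : -1 < a) (hc : 0 < c) :
    ∫⁻ r in Ioo 0 c, ENNReal.ofReal r ^ a =
      ENNReal.ofReal (a + 1)⁻¹ * ENNReal.ofReal c ^ (a + 1) := by
  have hint : IntegrableOn (fun r : ℝ => r ^ a) (Ioc 0 c) := by
    rw [← intervalIntegrable_iff_integrableOn_Ioc_of_le hc.le]
    exact intervalIntegral.intervalIntegrable_rpow' ha
  have hpow : ∫⁻ r in Ioc 0 c, ENNReal.ofReal r ^ a = ∫⁻ r in Ioc 0 c, ENNReal.ofReal (r ^ a) :=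
    setLIntegral_congr_fun measurableSet_Ioc fun r hr => ENNReal.ofReal_rpow_of_pos hr.1
  rw [Measure.restrict_congr_set Ioo_ae_eq_Ioc, hpow,
    ← ofReal_integral_eq_lintegral_ofReal hint
      ((ae_restrict_iff' measurableSet_Ioc).2 (ae_of_all _ fun r hr => Real.rpow_nonneg hr.1.le a)),
    ← intervalIntegral.integral_of_le hc.le, integral_rpow (Or.inl ha),
    Real.zero_rpow (by linarith), sub_zero, ENNReal.ofReal_rpow_of_pos hc,
    ← ENNReal.ofReal_mul (inv_pos.2 (by linarith)).le]
  congr 1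
  field_simp

theorem setLIntegral_coneMeasure (d : ℕ) {s : Set ℝ} (hs : MeasurableSet s) (G : ℝ → ℝ≥0∞) :
    ∫⁻ r in s, G r ∂coneMeasure d =
      ∫⁻ r in s ∩ Ioi 0, ENNReal.ofReal r ^ ((d : ℝ) - 1) * G r := by
  rw [coneMeasure, restrict_withDensity hs, lintegral_withDensity_eq_lintegral_mul_non_measurable _
      (by fun_prop) (ae_of_all _ fun _ => ENNReal.ofReal_lt_top),
    Measure.restrict_restrict hs]
  exact setLIntegral_congr_fun (hs.inter measurableSet_Ioi) fun r hr =>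
    congrArg (· * G r) (ENNReal.ofReal_rpow_of_pos hr.2).symm

theorem setLIntegral_coneMeasure_Ioi_rpow (d : ℕ) {a x : ℝ} (ha : a + d < 0) (hx : 0 < x) :
    ∫⁻ r in Ioi x, ENNReal.ofReal r ^ a ∂coneMeasure d =
      ENNReal.ofReal (-(a + d))⁻¹ * ENNReal.ofReal x ^ (a + d) := by
  rw [setLIntegral_coneMeasure d measurableSet_Ioi, Ioi_inter_Ioi, sup_eq_left.2 hx.le,
    setLIntegral_congr_fun measurableSet_Ioi fun r (hr : x < r) =>
      (ENNReal.rpow_add _ _ (by simpa using hx.trans hr) ENNReal.ofReal_ne_top).symm,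
    lintegral_Ioi_ofReal_rpow (by linarith) hx]
  ring_nf

theorem setLIntegral_coneMeasure_Iio_rpow (d : ℕ) {a y : ℝ} (ha : 0 < a + d) (hy : 0 < y) :
    ∫⁻ r in Iio y, ENNReal.ofReal r ^ a ∂coneMeasure d =
      ENNReal.ofReal (a + d)⁻¹ * ENNReal.ofReal y ^ (a + d) := by
  rw [setLIntegral_coneMeasure d measurableSet_Iio, Iio_inter_Ioi,
    setLIntegral_congr_fun measurableSet_Ioo fun r (hr : r ∈ Ioo 0 y) =>
      (ENNReal.rpow_add _ _ (by simpa using hr.1) ENNReal.ofReal_ne_top).symm,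
    lintegral_Ioo_ofReal_rpow (by linarith) hy]
  ring_nf

instance (d : ℕ) : SFinite (coneMeasure d) := by
  unfold coneMeasure; infer_instance

theorem ae_coneMeasure_pos (d : ℕ) : ∀ᵐ r ∂coneMeasure d, 0 < r :=
  (withDensity_absolutelyContinuous _ _).ae_le (ae_restrict_mem measurableSet_Ioi)

noncomputable def hardyKernel (α β x y : ℝ) : ℝ≥0∞ :=
  if x < y then ENNReal.ofReal x ^ (-α) * ENNReal.ofReal y ^ (-β) else 0

theorem measurable_hardyKernel (α β : ℝ) : Measurable (Function.uncurry (hardyKernel α β)) :=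
  Measurable.ite (measurableSet_lt measurable_fst measurable_snd) (by fun_prop) measurable_const

theorem lintegral_hardyKernel_mul (α β x : ℝ) (G : ℝ → ℝ≥0∞) (μ : Measure ℝ) :
    ∫⁻ y, hardyKernel α β x y * G y ∂μ =
      ∫⁻ y in Ioi x, ENNReal.ofReal x ^ (-α) * ENNReal.ofReal y ^ (-β) * G y ∂μ := by
  rw [← lintegral_indicator measurableSet_Ioi]
  refine lintegral_congr fun y => ?_
  by_cases hxy : x < y <;> simp [hardyKernel, hxy]

theorem lintegral_hardyKernel_mul_rpow_snd (d : ℕ) {α β t x : ℝ} (hαβ : α + β = d)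
    (ht : α < t) (hx : 0 < x) :
    ∫⁻ y, hardyKernel α β x y * ENNReal.ofReal y ^ (-t) ∂coneMeasure d =
      ENNReal.ofReal (t - α)⁻¹ * ENNReal.ofReal x ^ (-t) := by
  have hx0 : ENNReal.ofReal x ≠ 0 := by simpa using hx
  calc _ = ∫⁻ y in Ioi x, ENNReal.ofReal x ^ (-α) * ENNReal.ofReal y ^ (-β + -t)
        ∂coneMeasure d := by
        rw [lintegral_hardyKernel_mul]
        refine setLIntegral_congr_fun measurableSet_Ioi fun y (hy : x < y) => ?_
        rw [ENNReal.rpow_add _ _ (by simpa using hx.trans hy) ENNReal.ofReal_ne_top, mul_assoc]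
    _ = ENNReal.ofReal x ^ (-α) *
          (ENNReal.ofReal (-(-β + -t + d))⁻¹ * ENNReal.ofReal x ^ (-β + -t + d)) := by
        rw [lintegral_const_mul' _ _ (ENNReal.rpow_ne_top_of_ne_zero hx0 ENNReal.ofReal_ne_top),
          setLIntegral_coneMeasure_Ioi_rpow d (by linarith) hx]
    _ = _ := by
        rw [show -β + -t + d = α - t by linarith, mul_left_comm,
          ← ENNReal.rpow_add _ _ hx0 ENNReal.ofReal_ne_top]
        ring_nf

theorem lintegral_hardyKernel_mul_rpow_fst (d : ℕ) {α β t y : ℝ} (hαβ : α + β = d)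
    (ht : t < β) (hy : 0 < y) :
    ∫⁻ x, hardyKernel α β x y * ENNReal.ofReal x ^ (-t) ∂coneMeasure d =
      ENNReal.ofReal (β - t)⁻¹ * ENNReal.ofReal y ^ (-t) := by
  have hy0 : ENNReal.ofReal y ≠ 0 := by simpa using hy
  calc _ = ∫⁻ x in Iio y, ENNReal.ofReal y ^ (-β) * ENNReal.ofReal x ^ (-α + -t)
        ∂coneMeasure d := by
        rw [← lintegral_indicator measurableSet_Iio]
        refine lintegral_congr_ae ((ae_coneMeasure_pos d).mono fun x hx => ?_)
        by_cases hxy : x < y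
        · simp only [hardyKernel, hxy, ↓reduceIte, mem_Iio, indicator_of_mem,
            ENNReal.rpow_add _ _ (by simpa using hx) ENNReal.ofReal_ne_top]
          ring
        · simp [hardyKernel, hxy]
    _ = ENNReal.ofReal y ^ (-β) *
          (ENNReal.ofReal (-α + -t + d)⁻¹ * ENNReal.ofReal y ^ (-α + -t + d)) := by
        rw [lintegral_const_mul' _ _ (ENNReal.rpow_ne_top_of_ne_zero hy0 ENNReal.ofReal_ne_top),
          setLIntegral_coneMeasure_Iio_rpow d (by linarith) hy]
    _ = _ := by
        rw [show -α + -t + d = β - t by linarith, mul_left_comm,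
          ← ENNReal.rpow_add _ _ hy0 ENNReal.ofReal_ne_top]
        ring_nf

noncomputable def hardyOperator (d : ℕ) (α β : ℝ) (f : ℝ → ℝ) (r : ℝ) : ℝ :=
  ∫ r' in Ioi r, r ^ (-α) * r' ^ (-β) * f r' * r' ^ ((d : ℝ) - 1)

theorem enorm_hardyOperator_le (d : ℕ) (α β : ℝ) (f : ℝ → ℝ) {x : ℝ} (hx : 0 < x) :
    ‖hardyOperator d α β f x‖ₑ ≤ ∫⁻ y, hardyKernel α β x y * ‖f y‖ₑ ∂coneMeasure d := by
  refine (enorm_integral_le_lintegral_enorm _).trans_eq ?_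
  rw [lintegral_hardyKernel_mul, setLIntegral_coneMeasure d measurableSet_Ioi, Ioi_inter_Ioi,
    sup_eq_left.2 hx.le]
  refine setLIntegral_congr_fun measurableSet_Ioi fun y (hy : x < y) => ?_
  have hy0 : 0 < y := hx.trans hy
  rw [enorm_mul, enorm_mul, enorm_mul, Real.enorm_of_nonneg (Real.rpow_nonneg hx.le _),
    Real.enorm_of_nonneg (Real.rpow_nonneg hy0.le _),
    Real.enorm_of_nonneg (Real.rpow_nonneg hy0.le _), ← ENNReal.ofReal_rpow_of_pos hx,
    ← ENNReal.ofReal_rpow_of_pos hy0, ← ENNReal.ofReal_rpow_of_pos hy0]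
  ring

theorem eLpNorm_hardyOperator_le {d : ℕ} {α β p q : ℝ} (hαβ : α + β = d)
    (hpq : p.HolderConjugate q) (hα : α < d / p) {f : ℝ → ℝ}
    (hf : AEStronglyMeasurable f (coneMeasure d)) :
    eLpNorm (hardyOperator d α β f) (ENNReal.ofReal p) (coneMeasure d) ≤
      ENNReal.ofReal (d / p - α)⁻¹ * eLpNorm f (ENNReal.ofReal p) (coneMeasure d) := by
  set s : ℝ := d / (p * q) with hs
  have hsq : s * q = d / p := by rw [hs]; field_simp [hpq.symm.ne_zero]
  have hsp : β - s * p = d / p - α := by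
    have hd : d / p + d / q = (d : ℝ) := by
      rw [div_eq_mul_inv, div_eq_mul_inv, ← mul_add, hpq.inv_add_inv_eq_one, mul_one]
    have : s * p = d / q := by rw [hs]; field_simp [hpq.ne_zero]
    linarith
  have hpos := ae_coneMeasure_pos d
  calc _ ≤ ENNReal.ofReal (d / p - α)⁻¹ ^ (1 / q) * ENNReal.ofReal (d / p - α)⁻¹ ^ (1 / p) *
        eLpNorm f (ENNReal.ofReal p) (coneMeasure d) := by
        refine eLpNorm_le_of_schur (g := fun r => ENNReal.ofReal r ^ (-s))
          (h := fun r => ENNReal.ofReal r ^ (-s)) hpq (measurable_hardyKernel α β)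
          (by fun_prop) (by fun_prop) ?_ ?_ ?_ ?_ hf (hpos.mono fun x hx => ?_)
        · exact hpos.mono fun r hr => (ENNReal.rpow_pos (by simpa) ENNReal.ofReal_ne_top).ne'
        · exact hpos.mono fun r hr =>
            ENNReal.rpow_ne_top_of_ne_zero (by simpa) ENNReal.ofReal_ne_top
        · refine hpos.mono fun x hx => le_of_eq ?_
          simp only [← ENNReal.rpow_mul, neg_mul, hsq]
          exact lintegral_hardyKernel_mul_rpow_snd d hαβ hα hx
        · refine hpos.mono fun y hy => le_of_eq ?_
          simp only [← ENNReal.rpow_mul, neg_mul]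
          rw [lintegral_hardyKernel_mul_rpow_fst d hαβ (by linarith) hy, hsp]
        · exact enorm_hardyOperator_le d α β f hx
    _ = _ := by
        rw [← ENNReal.rpow_add _ _ (by simpa using hα) ENNReal.ofReal_ne_top, add_comm,
          one_div, one_div, hpq.inv_add_inv_eq_one, ENNReal.rpow_one]

theorem statement1_general (d : ℕ) (α β p : ℝ)
    (hαβ : α + β = d) (hp1 : 1 < p) (hp : p * max α 0 < d) :
    ∃ C : ℝ, 0 < C ∧ ∀ f : ℝ → ℝ, MemLp f (ENNReal.ofReal p) (coneMeasure d) →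
      eLpNorm (fun r : ℝ => ∫ r' in Ioi r, r ^ (-α) * r' ^ (-β) * f r' * r' ^ ((d : ℝ) - 1))
          (ENNReal.ofReal p) (coneMeasure d)
        ≤ ENNReal.ofReal C * eLpNorm f (ENNReal.ofReal p) (coneMeasure d) := by
  have hp0 : 0 < p := by linarith
  have hα : α < d / p := by
    rw [lt_div_iff₀ hp0, mul_comm]
    exact (mul_le_mul_of_nonneg_left (le_max_left α 0) hp0.le).trans_lt hp
  exact ⟨(d / p - α)⁻¹, inv_pos.2 (sub_pos.2 hα), fun f hf =>
    eLpNorm_hardyOperator_le hαβ (.conjExponent hp1) hα hf.1⟩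

/-- Let `d ≥ 3` be an integer and `α + β = d`, `β > 0`, `1 < p < ∞`,
`p·max(α,0) < d`. Then the operator `(Kf)(r) = ∫_r^∞ r^{-α} (r')^{-β} f(r') (r')^{d-1} dr'`
is bounded on `L^p((0,∞), r^{d-1} dr)`. -/
theorem statement1 (d : ℕ) (hd : 3 ≤ d) (α β p : ℝ)
    (hαβ : α + β = d) (hβ : 0 < β) (hp1 : 1 < p) (hp : p * max α 0 < d) :
    ∃ C : ℝ, 0 < C ∧ ∀ f : ℝ → ℝ, MemLp f (ENNReal.ofReal p) (coneMeasure d) →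
      eLpNorm (fun r : ℝ => ∫ r' in Ioi r, r ^ (-α) * r' ^ (-β) * f r' * r' ^ ((d : ℝ) - 1))
          (ENNReal.ofReal p) (coneMeasure d)
        ≤ ENNReal.ofReal C * eLpNorm f (ENNReal.ofReal p) (coneMeasure d) :=
  statement1_general d α β p hαβ hp1 hp
end

section
/- There exists a constant C > 0 such that for every real μ ≥ 1/2 and every real r ≥ 1, one has I_μ(r) ≤ C · 2^{-μ} r^{μ - 1} e^{r} / Γ(μ + 1/2). -/
/-!
For `μ ≥ 1/2` the weight `(1 - t²)^(μ - 1/2)` is at most `1` on `[-1, 1]`, so the Poisson integral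
is bounded by `∫_{-1}^{1} e^{-rt} dt = (e^r - e^{-r}) / r ≤ e^r / r`. Since `√π ≥ 1`, `C = 1` works.
-/

open Real

/-- The modified Bessel function of the first kind, via the Poisson integral representation
`I_μ(r) = (2^{-μ} r^{μ} / (π^{1/2} Γ(μ + 1/2))) · ∫_{-1}^{1} (1 - t²)^{μ - 1/2} e^{-rt} dt`. -/
noncomputable def besselI (μ r : ℝ) : ℝ :=
  (2 ^ (-μ) * r ^ μ / (Real.sqrt π * Real.Gamma (μ + 1 / 2))) *
    ∫ t in (-1 : ℝ)..1, (1 - t ^ 2) ^ (μ - 1 / 2) * Real.exp (-r * t)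

theorem integral_exp_neg_mul_neg_one_one {r : ℝ} (hr : r ≠ 0) :
    ∫ t in (-1 : ℝ)..1, exp (-r * t) = (exp r - exp (-r)) / r := by
  rw [intervalIntegral.integral_comp_mul_left (fun x => exp x) (neg_ne_zero.mpr hr),
    integral_exp, smul_eq_mul]
  field_simp
  ring_nf

theorem integral_exp_neg_mul_neg_one_one_le {r : ℝ} (hr : 0 < r) :
    ∫ t in (-1 : ℝ)..1, exp (-r * t) ≤ exp r / r := by
  rw [integral_exp_neg_mul_neg_one_one hr.ne']
  gcongr
  linarith [exp_pos (-r)]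

theorem integral_one_sub_sq_rpow_mul_exp_le {μ : ℝ} (hμ : 1 / 2 ≤ μ) (r : ℝ) :
    ∫ t in (-1 : ℝ)..1, (1 - t ^ 2) ^ (μ - 1 / 2) * exp (-r * t) ≤
      ∫ t in (-1 : ℝ)..1, exp (-r * t) := by
  have he : 0 ≤ μ - 1 / 2 := by linarith
  have hcont : Continuous fun t : ℝ => (1 - t ^ 2) ^ (μ - 1 / 2) * exp (-r * t) :=
    ((continuous_rpow_const he).comp (by fun_prop)).mul (by fun_prop)
  refine intervalIntegral.integral_mono_on (by norm_num) (hcont.intervalIntegrable _ _)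
    ((by fun_prop : Continuous fun t : ℝ => exp (-r * t)).intervalIntegrable _ _) ?_
  intro t ⟨ht₁, ht₂⟩
  have hweight : (1 - t ^ 2) ^ (μ - 1 / 2) ≤ 1 :=
    rpow_le_one (by nlinarith) (by nlinarith) he
  exact mul_le_of_le_one_left (exp_pos _).le hweight

/-- There is `C > 0` such that for all `μ ≥ 1/2` and `r ≥ 1`,
`I_μ(r) ≤ C · 2^{-μ} r^{μ-1} e^{r} / Γ(μ + 1/2)`. -/
theorem statement6 :
    ∃ C : ℝ, 0 < C ∧ ∀ μ r : ℝ, 1 / 2 ≤ μ → 1 ≤ r →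
      besselI μ r ≤ C * (2 ^ (-μ) * r ^ (μ - 1) * Real.exp r / Real.Gamma (μ + 1 / 2)) := by
  refine ⟨1, one_pos, fun μ r hμ hr => ?_⟩
  have hr₀ : 0 < r := one_pos.trans_le hr
  have hΓ : 0 < Gamma (μ + 1 / 2) := Gamma_pos_of_pos (by linarith)
  have hsqrtπ : 1 ≤ sqrt π := one_le_sqrt.2 (by linarith [pi_gt_three])
  have hcoef : 0 ≤ 2 ^ (-μ) * r ^ μ / (sqrt π * Gamma (μ + 1 / 2)) := by positivity
  calc besselI μ r
      ≤ 2 ^ (-μ) * r ^ μ / (sqrt π * Gamma (μ + 1 / 2)) * (exp r / r) :=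
        mul_le_mul_of_nonneg_left ((integral_one_sub_sq_rpow_mul_exp_le hμ r).trans
          (integral_exp_neg_mul_neg_one_one_le hr₀)) hcoef
    _ = 2 ^ (-μ) * r ^ (μ - 1) * exp r / (sqrt π * Gamma (μ + 1 / 2)) := by
        rw [rpow_sub hr₀, rpow_one]; ring
    _ ≤ 1 * (2 ^ (-μ) * r ^ (μ - 1) * exp r / Gamma (μ + 1 / 2)) := by
        rw [one_mul]
        exact div_le_div_of_nonneg_left (by positivity) hΓ (le_mul_of_one_le_left hΓ.le hsqrtπ)
end

section
/- There exists a constant C > 0 such that for every real μ ≥ 1/2 and every real r > 0, one has e^{-r/2} r^{μ - 1/2} ≤ C · 2^{μ} Γ(μ). -/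
/-!
With `s = μ - 1/2`, the inequality `log x ≤ x - 1` shows that `r ↦ e^{-r/2} r^s` is at most its
value `e^{-s} (2s)^s` at `r = 2s`, and also that it stays above `e^{-s} (2s)^s e^{-(t-2s)²/(2t)}`.
Since `2^μ Γ(μ) = ∫₀^∞ t^{s - 1/2} e^{-t/2} dt`, integrating the second bound over the
window `(2s, 2s + 2√s + 1]`, where the Gaussian factor is at least `e⁻¹` and `√t` is at most
the window's length, gives `e^{-s} (2s)^s ≤ e · 2^μ Γ(μ)`; so `C = e` works.
-/

open Real MeasureTheory Set

lemma exp_neg_half_mul_rpow_le {s t : ℝ} (hs : 0 ≤ s) (ht : 0 < t) :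
    exp (-t / 2) * t ^ s ≤ exp (-s) * (2 * s) ^ s := by
  rcases hs.eq_or_lt with rfl | hs
  · simpa using exp_le_one_iff.2 (by linarith)
  have hlog : log (t / (2 * s)) ≤ t / (2 * s) - 1 := log_le_sub_one_of_pos (by positivity)
  rw [log_div ht.ne' (by positivity)] at hlog
  rw [rpow_def_of_pos ht, rpow_def_of_pos (by positivity), ← exp_add, ← exp_add, exp_le_exp]
  have : s * (t / (2 * s)) = t / 2 := by field_simp
  nlinarith

lemma exp_neg_half_mul_rpow_ge {s t : ℝ} (hs : 0 ≤ s) (ht : 0 < t) :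
    exp (-s) * (2 * s) ^ s * exp (-((t - 2 * s) ^ 2 / (2 * t))) ≤ exp (-t / 2) * t ^ s := by
  rcases hs.eq_or_lt with rfl | hs
  · have : t ^ 2 / (2 * t) = t / 2 := by field_simp
    simp [this, neg_div]
  have hlog : log (2 * s / t) ≤ 2 * s / t - 1 := log_le_sub_one_of_pos (by positivity)
  rw [log_div (by positivity) ht.ne'] at hlog
  rw [rpow_def_of_pos ht, rpow_def_of_pos (by positivity), ← exp_add, ← exp_add, ← exp_add,
    exp_le_exp]
  have hsq : (t - 2 * s) ^ 2 / (2 * t) = t / 2 - 2 * s + s * (2 * s / t) := by field_simp; ring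
  rw [hsq]
  nlinarith

lemma mul_sub_le_setIntegral_of_le_on_Ioc {f : ℝ → ℝ} {S : Set ℝ} {a b m : ℝ}
    (hab : a ≤ b) (hS : MeasurableSet S) (hsub : Ioc a b ⊆ S) (hf : IntegrableOn f S)
    (hf0 : ∀ t ∈ S, 0 ≤ f t) (hm : ∀ t ∈ Ioc a b, m ≤ f t) :
    m * (b - a) ≤ ∫ t in S, f t := by
  calc m * (b - a) = m * volume.real (Ioc a b) := by
        rw [measureReal_def, volume_Ioc, ENNReal.toReal_ofReal (sub_nonneg.2 hab)]
    _ ≤ ∫ t in Ioc a b, f t :=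
        setIntegral_ge_of_const_le_real measurableSet_Ioc (by simp) hm (hf.mono_set hsub)
    _ ≤ ∫ t in S, f t :=
        setIntegral_mono_set hf ((ae_restrict_iff' hS).2 (ae_of_all _ hf0)) hsub.eventuallyLE

lemma integral_rpow_mul_exp_neg_half_mul_Ioi {μ : ℝ} (hμ : 0 < μ) :
    ∫ t in Ioi 0, t ^ (μ - 1) * exp (-(1 / 2 * t)) = 2 ^ μ * Gamma μ := by
  rw [integral_rpow_mul_exp_neg_mul_Ioi hμ (by norm_num)]
  norm_num

lemma integrableOn_rpow_mul_exp_neg_half_mul_Ioi {μ : ℝ} (hμ : 0 < μ) :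
    IntegrableOn (fun t => t ^ (μ - 1) * exp (-(1 / 2 * t))) (Ioi 0) := by
  simpa [rpow_one, neg_mul] using
    integrableOn_rpow_mul_exp_neg_mul_rpow (s := μ - 1) (p := 1) (b := 1 / 2) (by linarith)
      one_pos (by norm_num)

lemma sq_sub_div_le_one_of_mem_Ioc {s t : ℝ} (hs : 0 ≤ s)
    (ht : t ∈ Ioc (2 * s) (2 * s + (2 * √s + 1))) : (t - 2 * s) ^ 2 / (2 * t) ≤ 1 := by
  obtain ⟨hlo, hhi⟩ := ht
  have hsw : √s * √s = s := mul_self_sqrt hs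
  rw [div_le_one (by linarith)]
  rcases le_total (t - 2 * s) 2 with hu | hu
  · nlinarith
  · nlinarith [mul_nonneg (by linarith : 0 ≤ 2 * s + (2 * √s + 1) - t)
      (by linarith : 0 ≤ t - 2 * s + (2 * √s + 1) - 2)]

lemma exp_neg_mul_rpow_le_exp_one_mul_two_rpow_mul_Gamma {s : ℝ} (hs : 0 ≤ s) :
    exp (-s) * (2 * s) ^ s ≤ exp 1 * (2 ^ (s + 1 / 2) * Gamma (s + 1 / 2)) := by
  set M := exp (-s) * (2 * s) ^ s
  set w := 2 * √s + 1
  have hw : 0 < w := by positivity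
  have hlower : ∀ t ∈ Ioc (2 * s) (2 * s + w),
      exp (-1) * M / w ≤ t ^ (s + 1 / 2 - 1) * exp (-(1 / 2 * t)) := by
    intro t htw
    have ht : 0 < t := by linarith [htw.1]
    have hgauss := sq_sub_div_le_one_of_mem_Ioc hs htw
    have hsqrt : √t ≤ w :=
      sqrt_le_iff.2 ⟨hw.le, by nlinarith [htw.2, sqrt_nonneg s, mul_self_sqrt hs]⟩
    have hintegrand : t ^ (s + 1 / 2 - 1) * exp (-(1 / 2 * t)) = exp (-t / 2) * t ^ s / √t := by
      rw [show s + 1 / 2 - 1 = s - 1 / 2 by ring, rpow_sub ht, ← sqrt_eq_rpow]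
      ring_nf
    calc exp (-1) * M / w ≤ M * exp (-((t - 2 * s) ^ 2 / (2 * t))) / √t := by
          rw [mul_comm]
          gcongr
      _ ≤ exp (-t / 2) * t ^ s / √t :=
          div_le_div_of_nonneg_right (exp_neg_half_mul_rpow_ge hs ht) (sqrt_nonneg t)
      _ = _ := hintegrand.symm
  have hint := mul_sub_le_setIntegral_of_le_on_Ioc (by linarith) measurableSet_Ioi
    (fun t ht => (by linarith [ht.1, sqrt_nonneg s] : (0 : ℝ) < t))
    (integrableOn_rpow_mul_exp_neg_half_mul_Ioi (by linarith : 0 < s + 1 / 2))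
    (fun t (ht : 0 < t) => by positivity) hlower
  rw [integral_rpow_mul_exp_neg_half_mul_Ioi (by linarith), add_sub_cancel_left,
    div_mul_cancel₀ _ hw.ne'] at hint
  calc M = exp 1 * (exp (-1) * M) := by rw [← mul_assoc, ← exp_add]; simp
    _ ≤ _ := by gcongr

/-- There is `C > 0` such that for all `μ ≥ 1/2` and `r > 0`,
`e^{-r/2} r^{μ - 1/2} ≤ C · 2^{μ} Γ(μ)`. -/
theorem statement9 :
    ∃ C : ℝ, 0 < C ∧ ∀ μ r : ℝ, 1 / 2 ≤ μ → 0 < r →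
      Real.exp (-r / 2) * r ^ (μ - 1 / 2) ≤ C * 2 ^ μ * Real.Gamma μ := by
  refine ⟨exp 1, exp_pos 1, fun μ r hμ hr => ?_⟩
  obtain ⟨s, hs, rfl⟩ : ∃ s, 0 ≤ s ∧ μ = s + 1 / 2 :=
    ⟨μ - 1 / 2, by linarith, by ring⟩
  rw [add_sub_cancel_right, mul_assoc]
  exact (exp_neg_half_mul_rpow_le hs hr).trans
    (exp_neg_mul_rpow_le_exp_one_mul_two_rpow_mul_Gamma hs)
end

section
/- Let d ≥ 3 be an integer, let (μ_j)_{j∈ℕ} be a nondecreasing sequence of positive reals with smallest element μ_0 > 0, and suppose there exists C > 0 such that #{j : μ_j ≤ μ} ≤ C·μ^{d-1} for all μ > 1. Let Ω be a set and let (u_j)_{j∈ℕ} be functions u_j : Ω → ℂ satisfying |u_j(y)| ≤ C·μ_j^{(d-1)/2} for all j and all y ∈ Ω. Then there exists a constant C' > 0 such that for all y, y' ∈ Ω and every real s with 0 < s ≤ 1/2, the series ∑_{j} μ_j^{-1} · |u_j(y)| · |u_j(y')| · s^{μ_j} converges and its sum is at most C' · s^{μ_0}. -/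
/-!
Writing `s ^ μ_j = s ^ μ_0 · s ^ (μ_j - μ_0) ≤ 2 ^ μ_0 s ^ μ_0 · 2 ^ (-μ_j)`, the `j`-th term is at
most `s ^ μ_0` times a multiple of `μ_j ^ (d - 2) 2 ^ (-μ_j)`, independently of `y, y', s`. The
counting bound gives `j ≤ C μ_j ^ (d - 1)` for large `j`, and the exponential decay beats every
power, so `μ_j ^ (d - 2) 2 ^ (-μ_j) ≤ μ_j ^ (-2 (d - 1)) ≤ C ^ 2 / j ^ 2` eventually.
-/

open Filter Real

lemma succ_le_ncard_setOf_le {μ : ℕ → ℝ} (hμ : Monotone μ) {m : ℝ}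
    (hfin : {i | μ i ≤ m}.Finite) {j : ℕ} (hj : μ j ≤ m) : j + 1 ≤ {i | μ i ≤ m}.ncard := by
  rw [← Set.ncard_Iic_nat]
  exact Set.ncard_le_ncard (fun i hi => (hμ hi).trans hj) hfin

lemma tendsto_atTop_of_finite_setOf_le {μ : ℕ → ℝ} (hfin : ∀ m, 1 < m → {i | μ i ≤ m}.Finite) :
    Tendsto μ atTop atTop := by
  rw [← Nat.cofinite_eq_atTop]
  refine tendsto_atTop.2 fun b => eventually_cofinite.2 <|
    (hfin (max b 2) (by simp)).subset fun j hj => ?_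
  exact (le_of_not_ge hj).trans (le_max_left b 2)

lemma eventually_rpow_mul_rpow_le_rpow_neg (a p : ℝ) {b : ℝ} (hb₀ : 0 < b) (hb₁ : b < 1) :
    ∀ᶠ x in atTop, x ^ a * b ^ x ≤ x ^ (-p) := by
  have hlim := tendsto_rpow_mul_exp_neg_mul_atTop_nhds_zero (a + p) (-log b)
    (neg_pos.2 (log_neg hb₀ hb₁))
  filter_upwards [hlim.eventually (gt_mem_nhds one_pos), eventually_gt_atTop 0] with x hx hx₀
  have hbx : b ^ x = exp (-(-log b) * x) := by rw [rpow_def_of_pos hb₀]; ring_nf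
  calc x ^ a * b ^ x = x ^ (a + p) * exp (-(-log b) * x) * x ^ (-p) := by
        rw [← hbx, rpow_add hx₀, rpow_neg hx₀.le]
        field_simp
    _ ≤ x ^ (-p) := mul_le_of_le_one_left (by positivity) hx.le

section Counting

variable {μ : ℕ → ℝ} {C k : ℝ}

lemma eventually_natCast_le_mul_rpow_of_ncard_le (hμ : Monotone μ)
    (hcount : ∀ m : ℝ, 1 < m →
      {j : ℕ | μ j ≤ m}.Finite ∧ (({j : ℕ | μ j ≤ m}.ncard : ℝ) ≤ C * m ^ k)) :
    ∀ᶠ j : ℕ in atTop, (j : ℝ) ≤ C * μ j ^ k := by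
  have htend := tendsto_atTop_of_finite_setOf_le fun m hm => (hcount m hm).1
  filter_upwards [htend.eventually_gt_atTop 1] with j hj
  obtain ⟨hfin, hcard⟩ := hcount _ hj
  calc (j : ℝ) ≤ j + 1 := by linarith
    _ ≤ {i | μ i ≤ μ j}.ncard := by exact_mod_cast succ_le_ncard_setOf_le hμ hfin le_rfl
    _ ≤ C * μ j ^ k := hcard

lemma summable_rpow_mul_rpow_of_ncard_le (hμ : Monotone μ) (hC : 0 < C)
    (hcount : ∀ m : ℝ, 1 < m →
      {j : ℕ | μ j ≤ m}.Finite ∧ (({j : ℕ | μ j ≤ m}.ncard : ℝ) ≤ C * m ^ k))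
    (a : ℝ) {b : ℝ} (hb₀ : 0 < b) (hb₁ : b < 1) : Summable fun j => μ j ^ a * b ^ μ j := by
  have htend := tendsto_atTop_of_finite_setOf_le fun m hm => (hcount m hm).1
  refine Summable.of_norm_bounded_eventually_nat
    ((summable_one_div_nat_pow.2 one_lt_two).mul_left (C ^ 2)) ?_
  filter_upwards [htend.eventually (eventually_rpow_mul_rpow_le_rpow_neg a (2 * k) hb₀ hb₁),
    htend.eventually_gt_atTop 0, eventually_natCast_le_mul_rpow_of_ncard_le hμ hcount,
    eventually_gt_atTop 0] with j hdecay hμj hgrowth hj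
  rw [norm_of_nonneg (by positivity)]
  calc μ j ^ a * b ^ μ j ≤ μ j ^ (-(2 * k)) := hdecay
    _ = ((μ j ^ k) ^ 2)⁻¹ := by
        rw [rpow_neg hμj.le, mul_comm, rpow_mul hμj.le, rpow_two]
    _ ≤ ((j / C) ^ 2)⁻¹ := by
        gcongr
        rwa [div_le_iff₀' hC]
    _ = C ^ 2 * (1 / (j : ℝ) ^ 2) := by field_simp

end Counting

lemma rpow_le_div_rpow_mul_rpow {s b x₀ x : ℝ} (hs : 0 < s) (hsb : s ≤ b) (hx : x₀ ≤ x) :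
    s ^ x ≤ (s / b) ^ x₀ * b ^ x := by
  have hb : 0 < b := hs.trans_le hsb
  calc s ^ x = (s / b) ^ x * b ^ x := by
        rw [div_rpow hs.le hb.le, div_mul_cancel₀ _ (rpow_pos_of_pos hb x).ne']
    _ ≤ (s / b) ^ x₀ * b ^ x := mul_le_mul_of_nonneg_right
        (rpow_le_rpow_of_exponent_ge (div_pos hs hb) ((div_le_one hb).2 hsb) hx)
        (rpow_nonneg hb.le x)

lemma inv_mul_mul_le_rpow_sub_one {x C e v w : ℝ} (hx : 0 < x) (hv₀ : 0 ≤ v) (hw₀ : 0 ≤ w)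
    (hv : v ≤ C * x ^ (e / 2)) (hw : w ≤ C * x ^ (e / 2)) :
    x⁻¹ * v * w ≤ C ^ 2 * x ^ (e - 1) := by
  have := hv₀.trans hv
  calc x⁻¹ * v * w ≤ x⁻¹ * (C * x ^ (e / 2)) * (C * x ^ (e / 2)) := by gcongr
    _ = C ^ 2 * (x ^ (e / 2) * x ^ (e / 2)) / x := by ring
    _ = C ^ 2 * x ^ (e - 1) := by rw [← rpow_add hx, add_halves, rpow_sub_one hx.ne', mul_div_assoc]

theorem statement13_general (d : ℕ) (μs : ℕ → ℝ) (hmono : Monotone μs)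
    (hμpos : ∀ j, 0 < μs j)
    (C : ℝ) (hC : 0 < C)
    (hcount : ∀ m : ℝ, 1 < m →
      {j : ℕ | μs j ≤ m}.Finite ∧ (({j : ℕ | μs j ≤ m}.ncard : ℝ) ≤ C * m ^ ((d : ℝ) - 1)))
    {Ω : Type*} (u : ℕ → Ω → ℂ)
    (hu : ∀ (j : ℕ) (y : Ω), ‖u j y‖ ≤ C * (μs j) ^ (((d : ℝ) - 1) / 2)) :
    ∃ C' : ℝ, 0 < C' ∧ ∀ (y y' : Ω) (s : ℝ), 0 < s → s ≤ 1 / 2 →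
      Summable (fun j : ℕ =>
        (μs j)⁻¹ * ‖u j y‖ * ‖u j y'‖ * s ^ (μs j)) ∧
      (∑' j : ℕ, (μs j)⁻¹ * ‖u j y‖ * ‖u j y'‖ * s ^ (μs j))
        ≤ C' * s ^ (μs 0) := by
  set G : ℕ → ℝ := fun j => 2 ^ μs 0 * C ^ 2 * (μs j ^ ((d : ℝ) - 1 - 1) * (1 / 2) ^ μs j)
  have hG : Summable G := (summable_rpow_mul_rpow_of_ncard_le hmono hC hcount _
    (by norm_num) (by norm_num)).mul_left _
  have hG₀ : ∀ j, 0 < G j := fun j => by have := hμpos j; positivity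
  refine ⟨∑' j, G j, hG.tsum_pos (fun j => (hG₀ j).le) 0 (hG₀ 0),
    fun y y' s hs hs₂ => ?_⟩
  have hterm : ∀ j, (μs j)⁻¹ * ‖u j y‖ * ‖u j y'‖ * s ^ μs j ≤ s ^ μs 0 * G j := fun j => by
    have hx := hμpos j
    calc (μs j)⁻¹ * ‖u j y‖ * ‖u j y'‖ * s ^ μs j
        ≤ C ^ 2 * μs j ^ ((d : ℝ) - 1 - 1) * ((s / (1 / 2)) ^ μs 0 * (1 / 2) ^ μs j) :=
          mul_le_mul (inv_mul_mul_le_rpow_sub_one hx (norm_nonneg _) (norm_nonneg _)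
            (hu j y) (hu j y'))
            (rpow_le_div_rpow_mul_rpow hs hs₂ (hmono (Nat.zero_le j)))
            (by positivity) (by positivity)
      _ = s ^ μs 0 * G j := by
          rw [show s / (1 / 2) = 2 * s by ring, mul_rpow zero_le_two hs.le]
          ring
  have hsum : Summable fun j => (μs j)⁻¹ * ‖u j y‖ * ‖u j y'‖ * s ^ μs j :=
    Summable.of_nonneg_of_le (fun j => by have := hμpos j; positivity) hterm (hG.mul_left _)
  refine ⟨hsum, ?_⟩
  calc _ ≤ ∑' j, s ^ μs 0 * G j := hsum.tsum_le_tsum hterm (hG.mul_left _)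
    _ = (∑' j, G j) * s ^ μs 0 := by rw [tsum_mul_left, mul_comm]

/-- Let `d ≥ 3`, let `(μ_j)` be a nondecreasing sequence of positive reals
(so its smallest element is `μ_0 > 0`) satisfying the Weyl-type counting bound
`#{j : μ_j ≤ m} ≤ C·m^{d-1}` for `m > 1`, and let `u_j : Ω → ℂ` satisfy
`|u_j(y)| ≤ C·μ_j^{(d-1)/2}`. Then there is `C' > 0` such that for all `y, y' ∈ Ω` and all
`0 < s ≤ 1/2` the series `∑_j μ_j^{-1}·|u_j(y)|·|u_j(y')|·s^{μ_j}` converges with sum at most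
`C' · s^{μ_0}`. -/
theorem statement13 (d : ℕ) (hd : 3 ≤ d) (μs : ℕ → ℝ) (hmono : Monotone μs)
    (hμpos : ∀ j, 0 < μs j)
    (C : ℝ) (hC : 0 < C)
    (hcount : ∀ m : ℝ, 1 < m →
      {j : ℕ | μs j ≤ m}.Finite ∧ (({j : ℕ | μs j ≤ m}.ncard : ℝ) ≤ C * m ^ ((d : ℝ) - 1)))
    {Ω : Type*} (u : ℕ → Ω → ℂ)
    (hu : ∀ (j : ℕ) (y : Ω), ‖u j y‖ ≤ C * (μs j) ^ (((d : ℝ) - 1) / 2)) :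
    ∃ C' : ℝ, 0 < C' ∧ ∀ (y y' : Ω) (s : ℝ), 0 < s → s ≤ 1 / 2 →
      Summable (fun j : ℕ =>
        (μs j)⁻¹ * ‖u j y‖ * ‖u j y'‖ * s ^ (μs j)) ∧
      (∑' j : ℕ, (μs j)⁻¹ * ‖u j y‖ * ‖u j y'‖ * s ^ (μs j))
        ≤ C' * s ^ (μs 0) :=
  statement13_general d μs hmono hμpos C hC hcount u hu
end
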